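/- arXiv:2603.23434 — 4 statements merged into one kernel-verified Lean document; each statement's English description precedes it below -/
import Mathlib

section
/- The Petersen graph has no packing (1,1,2,2)-coloring: its vertex set cannot be partitioned into two independent sets and two 2-independent sets. -/
open SimpleGraph

variable {V : Type*}

/-- A set `S` is `i`-independent in `G` if distinct vertices of `S` are at
graph distance at least `i+1` (unreachable pairs have `edist = ⊤`). -/
def IsIndepOfOrder (G : SimpleGraph V) (i : ℕ) (S : Set V) : Prop :=
  ∀ ⦃x⦄, x ∈ S → ∀ ⦃y⦄, y ∈ S → x ≠ y → (i + 1 : ℕ∞) ≤ G.edist x y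

/-- A packing `(1,1,2,2)`-coloring of `G`. -/
def HasPacking1122 (G : SimpleGraph V) : Prop :=
  ∃ V1 V2 V3 V4 : Set V,
    (∀ v, v ∈ V1 ∨ v ∈ V2 ∨ v ∈ V3 ∨ v ∈ V4) ∧
    Disjoint V1 V2 ∧ Disjoint V1 V3 ∧ Disjoint V1 V4 ∧
    Disjoint V2 V3 ∧ Disjoint V2 V4 ∧ Disjoint V3 V4 ∧
    IsIndepOfOrder G 1 V1 ∧ IsIndepOfOrder G 1 V2 ∧
    IsIndepOfOrder G 2 V3 ∧ IsIndepOfOrder G 2 V4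

/-- The Petersen graph as the Kneser graph `K(5,2)`. -/
def petersenGraph : SimpleGraph {s : Finset (Fin 5) // s.card = 2} where
  Adj a b := Disjoint a.1 b.1
  symm := ⟨fun a b h => h.symm⟩
  loopless := ⟨by
    intro a h
    rw [disjoint_self] at h
    have := a.2
    simp [h] at this⟩

/-! Any two vertices of the Petersen graph are at distance at most 2, so each of the two
2-independent classes has at most one vertex. But the Petersen graph minus any two vertices
still contains a 5-cycle, so the remaining vertices cannot be split into two independent sets. -/

namespace SimpleGraph

variable {G : SimpleGraph V}

theorem ediam_le_two_of_forall_exists_adj_adj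
    (h : ∀ u v, u ≠ v → ¬G.Adj u v → ∃ w, G.Adj u w ∧ G.Adj v w) : G.ediam ≤ 2 :=
  ediam_le_iff.2 fun u v => not_lt.1 fun huv => by
    obtain ⟨hne, hnadj, hempty⟩ := two_lt_edist_iff.1 huv
    obtain ⟨w, huw, hvw⟩ := h u v hne hnadj
    exact hempty.subset (show w ∈ G.commonNeighbors u v from ⟨huw, hvw⟩)

theorem IsIndepSet.colorable_induce_of_subset_union {A B S : Set V} (hA : G.IsIndepSet A)
    (hB : G.IsIndepSet B) (hS : S ⊆ A ∪ B) : (G.induce S).Colorable 2 := by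
  classical
  refine (Coloring.mk (fun v : S => decide (v.1 ∈ A)) fun {u v} huv heq => ?_).colorable
  have hadj : G.Adj u v := huv
  rw [decide_eq_decide] at heq
  by_cases huA : u.1 ∈ A
  · exact hA huA (heq.1 huA) hadj.ne hadj
  · exact hB ((hS u.2).resolve_left huA) ((hS v.2).resolve_left (mt heq.2 huA)) hadj.ne hadj

def Hom.ofCycle {n : ℕ} (c : Fin (n + 2) → V) (hc : ∀ i, G.Adj (c i) (c (i + 1))) :
    cycleGraph (n + 2) →g G where
  toFun := c
  map_rel' {u v} huv := by
    rcases cycleGraph_adj.1 huv with h | h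
    · exact sub_eq_iff_eq_add'.1 h ▸ (hc v).symm
    · exact sub_eq_iff_eq_add'.1 h ▸ hc u

theorem not_colorable_two_of_odd_cycle {n : ℕ} (hn : Odd (n + 2)) (c : Fin (n + 2) → V)
    (hc : ∀ i, G.Adj (c i) (c (i + 1))) : ¬G.Colorable 2 := fun h2 => by
  have := (h2.of_hom (Hom.ofCycle c hc)).chromaticNumber_le
  rw [chromaticNumber_cycleGraph_of_odd (n + 2) (by omega) hn] at this
  norm_num at this

end SimpleGraph

section IsIndepOfOrder

variable {G : SimpleGraph V}

theorem isIndepOfOrder_one_iff {S : Set V} : IsIndepOfOrder G 1 S ↔ G.IsIndepSet S := by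
  refine forall₄_congr fun x _ y _ => imp_congr_right fun hxy => ?_
  rw [Nat.cast_one, ENat.add_one_le_iff ENat.one_ne_top, ← not_le, edist_le_one_iff_adj_or_eq]
  simp [hxy]

theorem IsIndepOfOrder.subsingleton {i : ℕ} {S : Set V} (hS : IsIndepOfOrder G i S)
    (hG : G.ediam ≤ i) : S.Subsingleton := fun x hx y hy => by
  by_contra hxy
  have := (hS hx hy hxy).trans (edist_le_ediam.trans hG)
  norm_cast at this
  omega

end IsIndepOfOrder

instance : DecidableRel petersenGraph.Adj := fun a b =>
  inferInstanceAs (Decidable (Disjoint a.1 b.1))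

theorem petersenGraph_ediam_le_two : petersenGraph.ediam ≤ 2 :=
  ediam_le_two_of_forall_exists_adj_adj (by decide)

set_option synthInstance.maxSize 2000 in
theorem petersenGraph_exists_five_cycle_avoiding (a b : {s : Finset (Fin 5) // s.card = 2}) :
    ∃ c : Fin 5 → {s : Finset (Fin 5) // s.card = 2},
      (∀ i, c i ≠ a ∧ c i ≠ b) ∧ ∀ i, petersenGraph.Adj (c i) (c (i + 1)) := by
  -- interleaving the avoidance conditions with the existentials prunes the search for `decide`
  have : ∀ a b : {s : Finset (Fin 5) // s.card = 2},
      ∃ c₀, (c₀ ≠ a ∧ c₀ ≠ b) ∧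
      ∃ c₁, (c₁ ≠ a ∧ c₁ ≠ b) ∧ petersenGraph.Adj c₀ c₁ ∧
      ∃ c₂, (c₂ ≠ a ∧ c₂ ≠ b) ∧ petersenGraph.Adj c₁ c₂ ∧
      ∃ c₃, (c₃ ≠ a ∧ c₃ ≠ b) ∧ petersenGraph.Adj c₂ c₃ ∧
      ∃ c₄, (c₄ ≠ a ∧ c₄ ≠ b) ∧ petersenGraph.Adj c₃ c₄ ∧ petersenGraph.Adj c₄ c₀ := by
    decide
  obtain ⟨c₀, h₀, c₁, h₁, a₀, c₂, h₂, a₁, c₃, h₃, a₂, c₄, h₄, a₃, a₄⟩ := this a b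
  refine ⟨![c₀, c₁, c₂, c₃, c₄], fun i => ?_, fun i => ?_⟩ <;> fin_cases i
  exacts [h₀, h₁, h₂, h₃, h₄, a₀, a₁, a₂, a₃, a₄]

theorem petersenGraph_not_colorable_two_induce_compl_union
    {S T : Set {s : Finset (Fin 5) // s.card = 2}} (hS : S.Subsingleton) (hT : T.Subsingleton) :
    ¬(petersenGraph.induce (S ∪ T)ᶜ).Colorable 2 := by
  have subset_singleton {U : Set {s : Finset (Fin 5) // s.card = 2}} (hU : U.Subsingleton) :
      ∃ a, U ⊆ {a} := by
    rcases hU.eq_empty_or_singleton with rfl | ⟨a, rfl⟩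
    exacts [⟨⟨{0, 1}, rfl⟩, Set.empty_subset _⟩, ⟨a, subset_rfl⟩]
  obtain ⟨a, ha⟩ := subset_singleton hS
  obtain ⟨b, hb⟩ := subset_singleton hT
  obtain ⟨c, hcab, hc⟩ := petersenGraph_exists_five_cycle_avoiding a b
  have hcST (i) : c i ∈ (S ∪ T)ᶜ :=
    fun h => h.elim (fun h => (hcab i).1 (ha h)) fun h => (hcab i).2 (hb h)
  exact not_colorable_two_of_odd_cycle (n := 3) (by decide) (fun i => ⟨c i, hcST i⟩) hc

/-- The Petersen graph has no packing `(1,1,2,2)`-coloring. -/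
theorem petersen_no_packing_1122 : ¬ HasPacking1122 petersenGraph := by
  rintro ⟨V1, V2, V3, V4, hcover, -, -, -, -, -, -, h1, h2, h3, h4⟩
  refine petersenGraph_not_colorable_two_induce_compl_union
    (h3.subsingleton petersenGraph_ediam_le_two) (h4.subsingleton petersenGraph_ediam_le_two) ?_
  refine (isIndepOfOrder_one_iff.1 h1).colorable_induce_of_subset_union
    (isIndepOfOrder_one_iff.1 h2) fun v hv => ?_
  simp only [Set.mem_compl_iff, Set.mem_union, not_or] at hv
  rcases hcover v with h | h | h | h
  exacts [Or.inl h, Or.inr h, (hv.1 h).elim, (hv.2 h).elim]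
end

section
/- If a finite simple graph G admits a packing (1,1,2,2)-coloring, then the 1-subdivision of G admits a packing (1,2,3,4,5)-coloring. -/
open SimpleGraph

variable {V : Type*}

/-- The 1-subdivision of `G`: each edge `uv` is replaced by the path
`u - x_{uv} - v` through a new vertex `x_{uv}` indexed by the edge. -/
def oneSubdivision (G : SimpleGraph V) : SimpleGraph (V ⊕ G.edgeSet) where
  Adj x y :=
    ∃ (u : V) (e : G.edgeSet), u ∈ (e : Sym2 V) ∧
      ((x = Sum.inl u ∧ y = Sum.inr e) ∨ (x = Sum.inr e ∧ y = Sum.inl u))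
  symm := by
    constructor
    rintro x y ⟨u, e, hue, h | h⟩
    · exact ⟨u, e, hue, Or.inr ⟨h.2, h.1⟩⟩
    · exact ⟨u, e, hue, Or.inl ⟨h.2, h.1⟩⟩
  loopless := by
    constructor
    rintro x ⟨u, e, hue, ⟨h1, h2⟩ | ⟨h1, h2⟩⟩ <;> simp_all

/-- A packing `(1,2,3,4,5)`-coloring of `G`. -/
def HasPacking12345 (G : SimpleGraph V) : Prop :=
  ∃ W : Fin 5 → Set V,
    (∀ v, ∃ i, v ∈ W i) ∧
    (∀ i j, i ≠ j → Disjoint (W i) (W j)) ∧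
    (∀ i : Fin 5, IsIndepOfOrder G ((i : ℕ) + 1) (W i))

/-!
Give every subdivision vertex colour 1 and move the classes `V1, V2, V3, V4` to colours
`2, 3, 4, 5`. Subdivision vertices are pairwise non-adjacent. A walk between original vertices
of the subdivision alternates between original and subdivision vertices, so it projects to a
walk in `G` of half its length: distances between original vertices at least double, and a
`k`-independent class of `G` becomes `(2k+1)`-independent, which is what colours `2, …, 5` need.
-/

open Sum Function

namespace oneSubdivision

variable {G : SimpleGraph V}

@[simp]
lemma adj_inl_inr {u : V} {e : G.edgeSet} :
    (oneSubdivision G).Adj (inl u) (inr e) ↔ u ∈ (e : Sym2 V) := by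
  simp [oneSubdivision]

@[simp]
lemma not_adj_inl_inl {u v : V} : ¬ (oneSubdivision G).Adj (inl u) (inl v) := by
  simp [oneSubdivision]

@[simp]
lemma not_adj_inr_inr {e f : G.edgeSet} : ¬ (oneSubdivision G).Adj (inr e) (inr f) := by
  simp [oneSubdivision]

lemma exists_walk_two_mul_length_le {u v : V} :
    ∀ p : (oneSubdivision G).Walk (inl u) (inl v), ∃ q : G.Walk u v, 2 * q.length ≤ p.length
  | .nil => ⟨.nil, by simp⟩
  | .cons (v := inl _) h _ => absurd h not_adj_inl_inl
  | .cons (v := inr _) _ (.cons (v := inr _) h _) => absurd h not_adj_inr_inr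
  | .cons (v := inr e) hu (.cons (v := inl b) hb p) => by
    obtain ⟨q, hq⟩ := exists_walk_two_mul_length_le p
    by_cases hub : u = b
    · subst hub
      exact ⟨q, by simp only [Walk.length_cons]; omega⟩
    · have hadj : G.Adj u b := by
        have he : (e : Sym2 V) = s(u, b) :=
          (Sym2.mem_and_mem_iff hub).mp ⟨adj_inl_inr.mp hu, adj_inl_inr.mp hb.symm⟩
        simpa [he] using e.2
      exact ⟨.cons hadj q, by simp only [Walk.length_cons]; omega⟩

lemma two_mul_edist_le_edist_inl (u v : V) :
    2 * G.edist u v ≤ (oneSubdivision G).edist (inl u) (inl v) := by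
  rw [edist_eq_sInf (G := oneSubdivision G)]
  refine le_sInf ?_
  rintro _ ⟨p, rfl⟩
  obtain ⟨q, hq⟩ := exists_walk_two_mul_length_le p
  calc 2 * G.edist u v ≤ 2 * q.length := by gcongr; exact G.edist_le q
    _ ≤ p.length := by exact_mod_cast hq

lemma isIndepSet_range_inr : (oneSubdivision G).IsIndepSet (Set.range inr) := by
  rintro _ ⟨e, rfl⟩ _ ⟨f, rfl⟩ _
  exact not_adj_inr_inr

end oneSubdivision

lemma SimpleGraph.IsIndepSet.isIndepOfOrder_one {G : SimpleGraph V} {S : Set V}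
    (hS : G.IsIndepSet S) : IsIndepOfOrder G 1 S := by
  intro x hx y hy hxy
  have : ¬ G.edist x y ≤ 1 := by
    rw [edist_le_one_iff_adj_or_eq]
    exact not_or_intro (hS hx hy hxy) hxy
  exact Order.add_one_le_of_lt (not_le.mp this)

lemma IsIndepOfOrder.image_inl {G : SimpleGraph V} {S : Set V} {k m : ℕ}
    (hS : IsIndepOfOrder G k S) (hm : m + 1 ≤ 2 * (k + 1)) :
    IsIndepOfOrder (oneSubdivision G) m (inl '' S) := by
  rintro _ ⟨u, hu, rfl⟩ _ ⟨v, hv, rfl⟩ huv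
  calc ((m + 1 : ℕ) : ℕ∞) ≤ 2 * (k + 1 : ℕ) := by exact_mod_cast hm
    _ ≤ 2 * G.edist u v := by gcongr; exact hS hu hv (ne_of_apply_ne _ huv)
    _ ≤ _ := oneSubdivision.two_mul_edist_le_edist_inl u v

lemma HasPacking1122.exists_fin_four {G : SimpleGraph V} (h : HasPacking1122 G) :
    ∃ U : Fin 4 → Set V, (∀ v, ∃ i, v ∈ U i) ∧ Pairwise (Disjoint on U) ∧
      ∀ i : Fin 4, IsIndepOfOrder G ((i : ℕ) / 2 + 1) (U i) := by
  obtain ⟨V1, V2, V3, V4, hcover, d12, d13, d14, d23, d24, d34, i1, i2, i3, i4⟩ := h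
  refine ⟨![V1, V2, V3, V4], fun v => ?_, fun i j hij => ?_, fun i => ?_⟩
  · rcases hcover v with hv | hv | hv | hv
    exacts [⟨0, hv⟩, ⟨1, hv⟩, ⟨2, hv⟩, ⟨3, hv⟩]
  · fin_cases i <;> fin_cases j <;> simp_all [onFun, disjoint_comm]
  · fin_cases i <;> assumption

section cons

variable {β : Type*} {n : ℕ} {U : Fin n → Set V}

lemma exists_mem_cons_range_inr (hU : ∀ v, ∃ i, v ∈ U i) (x : V ⊕ β) :
    ∃ i, x ∈
      (Fin.cons (Set.range inr) (fun i => inl '' U i) : Fin (n + 1) → Set (V ⊕ β)) i := by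
  rcases x with v | b
  · obtain ⟨i, hi⟩ := hU v
    exact ⟨i.succ, by simpa using hi⟩
  · exact ⟨0, by simp⟩

lemma pairwise_disjoint_cons_range_inr (hU : Pairwise (Disjoint on U)) :
    Pairwise (Disjoint on
      (Fin.cons (Set.range inr) (fun i => inl '' U i) : Fin (n + 1) → Set (V ⊕ β))) := by
  have hinr (i : Fin n) : Disjoint (Set.range inr) (inl '' U i : Set (V ⊕ β)) := by
    simp [Set.disjoint_left]
  intro i j hij
  induction i using Fin.cases <;> induction j using Fin.cases
  · exact absurd rfl hij
  · exact hinr _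
  · exact (hinr _).symm
  · exact (Set.disjoint_image_iff inl_injective).mpr (hU (ne_of_apply_ne _ hij))

end cons

theorem subdivision_packing_12345_of_packing_1122_general
    {V : Type*} (G : SimpleGraph V)
    (h : HasPacking1122 G) :
    HasPacking12345 (oneSubdivision G) := by
  obtain ⟨U, hcover, hdisj, hindep⟩ := h.exists_fin_four
  refine ⟨Fin.cons (Set.range inr) (fun i => inl '' U i), exists_mem_cons_range_inr hcover,
    fun i j hij => pairwise_disjoint_cons_range_inr hdisj hij, fun i => ?_⟩
  induction i using Fin.cases with
  | zero => simpa using oneSubdivision.isIndepSet_range_inr.isIndepOfOrder_one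
  | succ i => simpa using (hindep i).image_inl (m := i + 1 + 1) (by omega)

/-- If a finite simple graph admits a packing `(1,1,2,2)`-coloring, then its
1-subdivision admits a packing `(1,2,3,4,5)`-coloring. -/
theorem subdivision_packing_12345_of_packing_1122
    {V : Type*} [Fintype V] (G : SimpleGraph V)
    (h : HasPacking1122 G) :
    HasPacking12345 (oneSubdivision G) :=
  subdivision_packing_12345_of_packing_1122_general G h
end

section
/- Let G be a finite connected cubic graph and let (I1,I2) be a pair of disjoint independent sets satisfying Condition (I). Then every connected component of the subgraph of G induced on the red vertices has at most two vertices, i.e., it is a single vertex or a single edge. -/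
open SimpleGraph

variable {V : Type*}

/-- A finset `I` is an independent set of `G`. -/
def FinsetIndep (G : SimpleGraph V) (I : Finset V) : Prop :=
  ∀ u ∈ I, ∀ v ∈ I, ¬ G.Adj u v

/-- Condition (I): `|I1| + |I2|` is maximum among all pairs of disjoint
independent sets of `G`. -/
def CondI (G : SimpleGraph V) (I1 I2 : Finset V) : Prop :=
  ∀ J1 J2 : Finset V, Disjoint J1 J2 → FinsetIndep G J1 → FinsetIndep G J2 →
    J1.card + J2.card ≤ I1.card + I2.card

/-- The set of red vertices: the vertices outside `I1 ∪ I2`. -/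
def redSet (I1 I2 : Finset V) : Set V := {v | v ∉ I1 ∧ v ∉ I2}

/-- The number of connected components of the subgraph of `G` induced on the
red vertices. -/
noncomputable def numRedComp (G : SimpleGraph V) (I1 I2 : Finset V) : ℕ :=
  Nat.card ((G.induce (redSet I1 I2)).ConnectedComponent)

/-- Condition (II): subject to Condition (I), the number of connected
components of the subgraph induced on the red vertices is minimum. -/
def CondII (G : SimpleGraph V) (I1 I2 : Finset V) : Prop :=
  ∀ J1 J2 : Finset V, Disjoint J1 J2 → FinsetIndep G J1 → FinsetIndep G J2 →
    CondI G J1 J2 → numRedComp G I1 I2 ≤ numRedComp G J1 J2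

/-- The auxiliary graph `H` on the red vertices: two distinct red vertices are
adjacent iff their distance in `G` is at most 2. -/
def Hgraph (G : SimpleGraph V) (I1 I2 : Finset V) : SimpleGraph (redSet I1 I2) where
  Adj x y := x ≠ y ∧ G.edist (x : V) (y : V) ≤ 2
  symm := by
    constructor
    rintro x y ⟨hne, hd⟩
    exact ⟨hne.symm, by rwa [SimpleGraph.edist_comm]⟩
  loopless := by constructor; rintro x ⟨hne, -⟩; exact hne rfl

/-! In a maximum pair, a red vertex `v` can join neither `I1` nor `I2`, so it has a neighbour in
each of them. In a cubic graph this leaves `v` at most one red neighbour, so every component of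
the red subgraph is a vertex or an edge. -/

namespace SimpleGraph

variable {W : Type*} {H : SimpleGraph W}

theorem Reachable.eq_or_adj_of_neighborSet_subsingleton
    (hH : ∀ v, (H.neighborSet v).Subsingleton) {x y : W} (h : H.Reachable x y) :
    y = x ∨ H.Adj x y := by
  obtain ⟨p⟩ := h
  induction p with
  | nil => exact Or.inl rfl
  | cons hxz _ ih =>
    rcases ih with rfl | hzy
    · exact Or.inr hxz
    · exact Or.inl (hH _ hxz.symm hzy).symm

theorem ConnectedComponent.ncard_supp_le_two_of_neighborSet_subsingleton
    (c : H.ConnectedComponent) (hH : ∀ v, (H.neighborSet v).Subsingleton) :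
    c.supp.ncard ≤ 2 := by
  induction c using ConnectedComponent.ind with
  | h x =>
    have hsupp : (H.connectedComponentMk x).supp ⊆ insert x (H.neighborSet x) := fun y hy =>
      (ConnectedComponent.eq.mp hy).symm.eq_or_adj_of_neighborSet_subsingleton hH
    calc (H.connectedComponentMk x).supp.ncard
        ≤ (insert x (H.neighborSet x)).ncard :=
          Set.ncard_le_ncard hsupp ((hH x).finite.insert x)
      _ ≤ (H.neighborSet x).ncard + 1 := Set.ncard_insert_le _ _
      _ ≤ 2 := by have := (Set.ncard_le_one_iff (hH x).finite).mpr (hH x · ·); omega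

end SimpleGraph

section

variable {G : SimpleGraph V} {I1 I2 : Finset V}

theorem FinsetIndep.insert [DecidableEq V] {I : Finset V} (hI : FinsetIndep G I) {v : V}
    (hv : ∀ a ∈ I, ¬G.Adj v a) : FinsetIndep G (insert v I) := by
  intro u hu w hw
  rw [Finset.mem_insert] at hu hw
  rcases hu with rfl | huI <;> rcases hw with rfl | hwI
  · exact G.irrefl
  · exact hv w hwI
  · exact fun h => hv u huI h.symm
  · exact hI u huI w hwI

theorem CondI.symm (hmax : CondI G I1 I2) : CondI G I2 I1 :=
  fun J1 J2 hdisj hJ1 hJ2 => by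
    have := hmax J2 J1 hdisj.symm hJ2 hJ1
    omega

theorem CondI.exists_mem_adj_of_notMem (hmax : CondI G I1 I2) (hdisj : Disjoint I1 I2)
    (hI1 : FinsetIndep G I1) (hI2 : FinsetIndep G I2) {v : V} (hv1 : v ∉ I1) (hv2 : v ∉ I2) :
    ∃ a ∈ I1, G.Adj v a := by
  classical
  by_contra! hv
  have := hmax (insert v I1) I2 (Finset.disjoint_insert_left.mpr ⟨hv2, hdisj⟩) (hI1.insert hv) hI2
  rw [Finset.card_insert_of_notMem hv1] at this
  omega

theorem CondI.neighborSet_induce_redSet_subsingleton [Fintype V] [DecidableRel G.Adj]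
    (hmax : CondI G I1 I2) (hdisj : Disjoint I1 I2) (hI1 : FinsetIndep G I1)
    (hI2 : FinsetIndep G I2) (hdeg : ∀ v, G.degree v ≤ 3) (v : redSet I1 I2) :
    ((G.induce (redSet I1 I2)).neighborSet v).Subsingleton := by
  classical
  obtain ⟨p, hp, hvp⟩ := hmax.exists_mem_adj_of_notMem hdisj hI1 hI2 v.2.1 v.2.2
  obtain ⟨q, hq, hvq⟩ := hmax.symm.exists_mem_adj_of_notMem hdisj.symm hI2 hI1 v.2.2 v.2.1
  have hpq : p ≠ q := fun h => Finset.disjoint_left.mp hdisj hp (h ▸ hq)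
  have hred : (G.neighborFinset v \ {p, q}).card ≤ 1 := by
    rw [Finset.card_sdiff_of_subset (by simp [Finset.insert_subset_iff, hvp, hvq]),
      card_neighborFinset_eq_degree, Finset.card_pair hpq]
    have := hdeg v
    omega
  have hmem : ∀ w : redSet I1 I2, G.Adj v w → (w : V) ∈ G.neighborFinset v \ {p, q} :=
    fun w hvw => by
      have hwp : (w : V) ≠ p := fun h => w.2.1 (h ▸ hp)
      have hwq : (w : V) ≠ q := fun h => w.2.2 (h ▸ hq)
      simp [hvw, hwp, hwq]
  exact fun b hb c hc => Subtype.ext (Finset.card_le_one.mp hred _ (hmem b hb) _ (hmem c hc))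

end

theorem red_components_small_general
    {V : Type*} [Fintype V] (G : SimpleGraph V) [DecidableRel G.Adj]
    (hcubic : ∀ v : V, G.degree v = 3)
    (I1 I2 : Finset V) (hdisj : Disjoint I1 I2)
    (hI1 : FinsetIndep G I1) (hI2 : FinsetIndep G I2) (hmax : CondI G I1 I2) :
    ∀ c : (G.induce (redSet I1 I2)).ConnectedComponent, c.supp.ncard ≤ 2 := fun c =>
  c.ncard_supp_le_two_of_neighborSet_subsingleton
    (hmax.neighborSet_induce_redSet_subsingleton hdisj hI1 hI2 fun v => (hcubic v).le)

/-- Under Condition (I), every connected component of the subgraph of `G`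
induced on the red vertices has at most two vertices. -/
theorem red_components_small
    {V : Type*} [Fintype V] [DecidableEq V] (G : SimpleGraph V) [DecidableRel G.Adj]
    (hconn : G.Connected) (hcubic : ∀ v : V, G.degree v = 3)
    (I1 I2 : Finset V) (hdisj : Disjoint I1 I2)
    (hI1 : FinsetIndep G I1) (hI2 : FinsetIndep G I2) (hmax : CondI G I1 I2) :
    ∀ c : (G.induce (redSet I1 I2)).ConnectedComponent, c.supp.ncard ≤ 2 :=
  red_components_small_general G hcubic I1 I2 hdisj hI1 hI2 hmax
end

section
/- Let G be a finite connected cubic graph containing ten distinct vertices x, u, v, w, u1, u2, v1, v2, w1, w2 such that G contains the edges xu, xv, xw, uu1, uu2, vv1, vv2, ww1, ww2, u1v2, u2v1, u1w2, u2w1, v1w2, v2w1. Then G is isomorphic to the Petersen graph. -/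
/-!
Label the ten vertices of the configuration by 2-subsets of `{0, …, 4}` so that the fifteen
prescribed edges become the fifteen edges of `K(5,2)`; this gives an injective homomorphism from
the Petersen graph into `G`. As both graphs are cubic, every neighbour of an image vertex is the
image of a neighbour, so the image is closed under adjacency (hence everything, `G` being
connected) and the homomorphism reflects adjacency.
-/

open SimpleGraph

namespace SimpleGraph

variable {V W : Type*} {G : SimpleGraph V} {H : SimpleGraph W}

namespace Hom

theorem exists_adj_apply_eq_of_degree_le (f : H →g G) (hf : Function.Injective f) {a : W}
    [Fintype (H.neighborSet a)] [Fintype (G.neighborSet (f a))]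
    (hdeg : G.degree (f a) ≤ H.degree a) {y : V} (hy : G.Adj (f a) y) :
    ∃ b, H.Adj a b ∧ f b = y := by
  have hsub : (H.neighborFinset a).map ⟨f, hf⟩ ⊆ G.neighborFinset (f a) := by
    intro z hz
    obtain ⟨b, hb, rfl⟩ := Finset.mem_map.mp hz
    exact (mem_neighborFinset _ _ _).mpr (f.map_adj ((mem_neighborFinset _ _ _).mp hb))
  have heq := Finset.eq_of_subset_of_card_le hsub (by simpa using hdeg)
  have hy' : y ∈ (H.neighborFinset a).map ⟨f, hf⟩ := heq ▸ (mem_neighborFinset _ _ _).mpr hy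
  simpa using hy'

variable [H.LocallyFinite] [G.LocallyFinite]

theorem surjective_of_degree_le [Nonempty W] (hG : G.Preconnected) (f : H →g G)
    (hf : Function.Injective f) (hdeg : ∀ a, G.degree (f a) ≤ H.degree a) :
    Function.Surjective f := by
  have walk_mem_range : ∀ {p q : V}, G.Walk p q → p ∈ Set.range f → q ∈ Set.range f := by
    intro p q w
    induction w with
    | nil => exact id
    | cons hadj _ ih =>
      rintro ⟨a, rfl⟩
      obtain ⟨b, -, rfl⟩ := f.exists_adj_apply_eq_of_degree_le hf (hdeg a) hadj
      exact ih ⟨b, rfl⟩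
  intro y
  obtain ⟨a⟩ := ‹Nonempty W›
  exact walk_mem_range (hG (f a) y).some ⟨a, rfl⟩

theorem adj_of_adj_apply_of_degree_le (f : H →g G) (hf : Function.Injective f) {a b : W}
    (hdeg : G.degree (f a) ≤ H.degree a) (h : G.Adj (f a) (f b)) : H.Adj a b := by
  obtain ⟨c, hac, hcb⟩ := f.exists_adj_apply_eq_of_degree_le hf hdeg h
  exact hf hcb ▸ hac

noncomputable def isoOfDegreeLe [Nonempty W] (hG : G.Preconnected) (f : H →g G)
    (hf : Function.Injective f) (hdeg : ∀ a, G.degree (f a) ≤ H.degree a) : H ≃g G where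
  toEquiv := Equiv.ofBijective f ⟨hf, f.surjective_of_degree_le hG hf hdeg⟩
  map_rel_iff' := ⟨f.adj_of_adj_apply_of_degree_le hf (hdeg _), f.map_adj⟩

end Hom

end SimpleGraph

namespace petersenGraph

instance : DecidableRel petersenGraph.Adj :=
  fun a b => inferInstanceAs (Decidable (Disjoint a.1 b.1))

theorem degree_eq_three (a : {s : Finset (Fin 5) // s.card = 2}) : petersenGraph.degree a = 3 := by
  revert a; decide

/-- The edges of the configuration, vertex `i` being the `i`-th of
`x, u, v, w, u1, u2, v1, v2, w1, w2`. -/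
def clawEdges : List (Fin 10 × Fin 10) :=
  [(0, 1), (0, 2), (0, 3), (1, 4), (1, 5), (2, 6), (2, 7), (3, 8), (3, 9),
   (4, 7), (5, 6), (4, 9), (5, 8), (6, 9), (7, 8)]

def clawLabel : Fin 10 → {s : Finset (Fin 5) // s.card = 2} :=
  ![⟨{0, 1}, rfl⟩, ⟨{2, 3}, rfl⟩, ⟨{2, 4}, rfl⟩, ⟨{3, 4}, rfl⟩,
    ⟨{0, 4}, rfl⟩, ⟨{1, 4}, rfl⟩, ⟨{0, 3}, rfl⟩, ⟨{1, 3}, rfl⟩,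
    ⟨{0, 2}, rfl⟩, ⟨{1, 2}, rfl⟩]

theorem clawLabel_bijective : Function.Bijective clawLabel := by decide

theorem mem_clawEdges_of_adj {i j : Fin 10} (h : petersenGraph.Adj (clawLabel i) (clawLabel j)) :
    (i, j) ∈ clawEdges ∨ (j, i) ∈ clawEdges := by
  revert i j; decide

noncomputable def clawEquiv : Fin 10 ≃ {s : Finset (Fin 5) // s.card = 2} :=
  Equiv.ofBijective clawLabel clawLabel_bijective

noncomputable def homOfClawEdges {V : Type*} {G : SimpleGraph V} (p : Fin 10 → V)
    (hp : ∀ e ∈ clawEdges, G.Adj (p e.1) (p e.2)) : petersenGraph →g G where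
  toFun := p ∘ clawEquiv.symm
  map_rel' {a b} hab := by
    obtain ⟨i, rfl⟩ := clawEquiv.surjective a
    obtain ⟨j, rfl⟩ := clawEquiv.surjective b
    simp only [Function.comp_apply, Equiv.symm_apply_apply]
    rcases mem_clawEdges_of_adj hab with h | h
    · exact hp _ h
    · exact (hp _ h).symm

end petersenGraph

theorem petersen_of_claw_configuration_general
    {V : Type*} [Fintype V] (G : SimpleGraph V) [DecidableRel G.Adj]
    (hconn : G.Connected) (hcubic : ∀ a : V, G.degree a = 3)
    (x u v w u1 u2 v1 v2 w1 w2 : V)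
    (hdistinct : ([x, u, v, w, u1, u2, v1, v2, w1, w2] : List V).Pairwise (· ≠ ·))
    (hxu : G.Adj x u) (hxv : G.Adj x v) (hxw : G.Adj x w)
    (huu1 : G.Adj u u1) (huu2 : G.Adj u u2)
    (hvv1 : G.Adj v v1) (hvv2 : G.Adj v v2)
    (hww1 : G.Adj w w1) (hww2 : G.Adj w w2)
    (h1 : G.Adj u1 v2) (h2 : G.Adj u2 v1)
    (h3 : G.Adj u1 w2) (h4 : G.Adj u2 w1)
    (h5 : G.Adj v1 w2) (h6 : G.Adj v2 w1) :
    Nonempty (G ≃g petersenGraph) := by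
  let p : Fin 10 → V := ![x, u, v, w, u1, u2, v1, v2, w1, w2]
  have hp : ∀ e ∈ petersenGraph.clawEdges, G.Adj (p e.1) (p e.2) := by
    simp only [petersenGraph.clawEdges, List.forall_mem_cons]
    exact ⟨hxu, hxv, hxw, huu1, huu2, hvv1, hvv2, hww1, hww2, h1, h2, h3, h4, h5, h6, nofun⟩
  let f := petersenGraph.homOfClawEdges p hp
  have hf : Function.Injective f :=
    (List.nodup_ofFn (f := p) |>.mp hdistinct).comp petersenGraph.clawEquiv.symm.injective
  have hdeg : ∀ a, G.degree (f a) ≤ petersenGraph.degree a := fun a => by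
    rw [hcubic, petersenGraph.degree_eq_three]
  have : Nonempty {s : Finset (Fin 5) // s.card = 2} := ⟨petersenGraph.clawLabel 0⟩
  exact ⟨(f.isoOfDegreeLe hconn.preconnected hf hdeg).symm⟩

/-- A finite connected cubic graph containing the configuration of
Lemma 6 (a claw `x;u,v,w` whose outer neighbours are matched crosswise)
is isomorphic to the Petersen graph. -/
theorem petersen_of_claw_configuration
    {V : Type*} [Fintype V] [DecidableEq V] (G : SimpleGraph V) [DecidableRel G.Adj]
    (hconn : G.Connected) (hcubic : ∀ a : V, G.degree a = 3)
    (x u v w u1 u2 v1 v2 w1 w2 : V)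
    (hdistinct : ([x, u, v, w, u1, u2, v1, v2, w1, w2] : List V).Pairwise (· ≠ ·))
    (hxu : G.Adj x u) (hxv : G.Adj x v) (hxw : G.Adj x w)
    (huu1 : G.Adj u u1) (huu2 : G.Adj u u2)
    (hvv1 : G.Adj v v1) (hvv2 : G.Adj v v2)
    (hww1 : G.Adj w w1) (hww2 : G.Adj w w2)
    (h1 : G.Adj u1 v2) (h2 : G.Adj u2 v1)
    (h3 : G.Adj u1 w2) (h4 : G.Adj u2 w1)
    (h5 : G.Adj v1 w2) (h6 : G.Adj v2 w1) :
    Nonempty (G ≃g petersenGraph) :=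
  petersen_of_claw_configuration_general G hconn hcubic x u v w u1 u2 v1 v2 w1 w2 hdistinct hxu hxv
    hxw huu1 huu2 hvv1 hvv2 hww1 hww2 h1 h2 h3 h4 h5 h6
end
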